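/- arXiv:2505.11788 — 3 statements merged into one kernel-verified Lean document; each statement's English description precedes it below -/
import Mathlib

section
/- Speculative decoding is unbiased: let x and y be probability distributions on a finite vocabulary V with x_v > 0 for all v, define the rejection probability β_v = max(1 - y_v/x_v, 0) and the resampling distribution p_v = max(y_v - x_v,0) / Σ_i max(y_i - x_i,0) (assuming the normalizer is positive). Then for every v, x_v·(1 - β_v) + (Σ_i x_i·β_i)·p_v = y_v. -/
/-!
Accepting a draft token `v` with probability `1 - β_v` contributes `x_v (1 - β_v) = min (x_v, y_v)`,
while the total rejection mass `∑ x_i β_i = ∑ (x_i - y_i)⁺` equals the normaliser `∑ (y_i - x_i)⁺`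
because both distributions have the same total mass. Hence the resampling step contributes exactly
`(y_v - x_v)⁺`, and `min (x_v, y_v) + (y_v - x_v)⁺ = y_v`.
-/

open Finset

section Field

variable {α : Type*} [Field α] [LinearOrder α] [IsStrictOrderedRing α] {a : α}

theorem mul_max_one_sub_div_zero (ha : 0 < a) (b : α) :
    a * max (1 - b / a) 0 = max (a - b) 0 := by
  rw [mul_max_of_nonneg _ _ ha.le, mul_zero, mul_one_sub, mul_div_cancel₀ _ ha.ne']

theorem mul_one_sub_max_one_sub_div_zero (ha : 0 < a) (b : α) :
    a * (1 - max (1 - b / a) 0) = min a b := by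
  rw [mul_one_sub, mul_max_one_sub_div_zero ha, ← min_sub_sub_left, sub_zero, sub_sub_cancel,
    min_comm]

end Field

section OrderedGroup

variable {α ι : Type*} [AddCommGroup α] [LinearOrder α] [IsOrderedAddMonoid α]

theorem max_sub_zero_sub_max_sub_zero (a b : α) : max (a - b) 0 - max (b - a) 0 = a - b := by
  simpa [posPart, negPart, neg_sub] using posPart_sub_negPart (a - b)

theorem min_add_max_sub_zero (a b : α) : min a b + max (b - a) 0 = b := by
  rw [← sub_self a, max_sub_sub_right, ← add_sub_assoc, max_comm, min_add_max,
    add_sub_cancel_left]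

theorem sum_max_sub_zero_comm {s : Finset ι} {f g : ι → α} (h : ∑ i ∈ s, f i = ∑ i ∈ s, g i) :
    ∑ i ∈ s, max (f i - g i) 0 = ∑ i ∈ s, max (g i - f i) 0 := by
  rw [← sub_eq_zero, ← sum_sub_distrib]
  simp only [max_sub_zero_sub_max_sub_zero]
  rw [sum_sub_distrib, h, sub_self]

end OrderedGroup

theorem stmt_1_general {V : Type*} [Fintype V] (x y : V → ℝ)
    (hx : ∀ v, 0 < x v)
    (hx1 : ∑ v, x v = 1) (hy1 : ∑ v, y v = 1)
    (hZ : 0 < ∑ i, max (y i - x i) 0) :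
    ∀ v, x v * (1 - max (1 - y v / x v) 0)
        + (∑ i, x i * max (1 - y i / x i) 0)
          * (max (y v - x v) 0 / ∑ i, max (y i - x i) 0) = y v := by
  intro v
  have rejection_mass : ∑ i, x i * max (1 - y i / x i) 0 = ∑ i, max (y i - x i) 0 := by
    simp only [mul_max_one_sub_div_zero (hx _)]
    exact sum_max_sub_zero_comm (hx1.trans hy1.symm)
  rw [mul_one_sub_max_one_sub_div_zero (hx v), rejection_mass, mul_div_cancel₀ _ hZ.ne',
    min_add_max_sub_zero]

theorem stmt_1 {V : Type*} [Fintype V] (x y : V → ℝ)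
    (hx : ∀ v, 0 < x v) (hy : ∀ v, 0 ≤ y v)
    (hx1 : ∑ v, x v = 1) (hy1 : ∑ v, y v = 1)
    (hZ : 0 < ∑ i, max (y i - x i) 0) :
    ∀ v, x v * (1 - max (1 - y v / x v) 0)
        + (∑ i, x i * max (1 - y i / x i) 0)
          * (max (y v - x v) 0 / ∑ i, max (y i - x i) 0) = y v :=
  stmt_1_general x y hx hx1 hy1 hZ
end

section
/- Proposition 1 (upper bound on TVD of resampling distributions): Let x, x̂, y be probability distributions on a finite vocabulary V with D_TV(x,y) > 0 and Σ_i max(y_i - x̂_i, 0) > 0. Define p_v = max(y_v - x_v,0)/Σ_i max(y_i - x_i,0) and q_v = max(y_v - x̂_v,0)/Σ_i max(y_i - x̂_i,0). Then D_TV(p, q) ≤ (Σ_v |x_v - x̂_v|) / D_TV(x, y). -/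
/-!
The positive part of `y - x` has total mass `D_TV(x, y)`, and `v ↦ max (y v - x v) 0` is
1-Lipschitz in `x` for the `ℓ¹` distance. Normalising two nonnegative vectors `a`, `b` with
masses `A`, `B` costs at most a factor `2 / A`: writing `a/A - b/B = (a - b)/A + b (B - A)/(A B)`,
the second term has `ℓ¹` norm `|A - B| / A ≤ ‖a - b‖₁ / A`.
-/

open Finset

lemma two_mul_max_sub_zero (a : ℝ) : 2 * max a 0 = a + |a| := by
  rcases le_or_gt 0 a with h | h
  · rw [max_eq_left h, abs_of_nonneg h]; ring
  · rw [max_eq_right h.le, abs_of_neg h]; ring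

lemma sum_max_sub_zero_eq_half_sum_abs_sub {ι : Type*} (s : Finset ι) (x y : ι → ℝ)
    (hxy : ∑ i ∈ s, x i = ∑ i ∈ s, y i) :
    ∑ i ∈ s, max (y i - x i) 0 = (1 / 2) * ∑ i ∈ s, |x i - y i| := by
  have h : 2 * ∑ i ∈ s, max (y i - x i) 0 = ∑ i ∈ s, |x i - y i| := by
    simp only [mul_sum, two_mul_max_sub_zero, sum_add_distrib, sum_sub_distrib, hxy, sub_self,
      zero_add, abs_sub_comm (y _)]
  linarith

lemma abs_max_sub_zero_sub_max_sub_zero_le (y x x' : ℝ) :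
    |max (y - x) 0 - max (y - x') 0| ≤ |x - x'| := by
  calc |max (y - x) 0 - max (y - x') 0| ≤ |(y - x) - (y - x')| := abs_max_sub_max_le_abs _ _ _
    _ = |x - x'| := by rw [sub_sub_sub_cancel_left, abs_sub_comm]

lemma sum_abs_div_sum_sub_div_sum_le {ι : Type*} (s : Finset ι) (a b : ι → ℝ)
    (hb : ∀ i ∈ s, 0 ≤ b i) (hA : 0 < ∑ i ∈ s, a i) (hB : 0 < ∑ i ∈ s, b i) :
    ∑ i ∈ s, |a i / ∑ j ∈ s, a j - b i / ∑ j ∈ s, b j| ≤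
      2 * (∑ i ∈ s, |a i - b i|) / ∑ i ∈ s, a i := by
  set A := ∑ i ∈ s, a i
  set B := ∑ i ∈ s, b i
  set S := ∑ i ∈ s, |a i - b i|
  have hAB : |A - B| ≤ S := by
    rw [← sum_sub_distrib]; exact abs_sum_le_sum_abs _ _
  have hterm : ∀ i ∈ s, |a i / A - b i / B| ≤ |a i - b i| / A + b i * |A - B| / (A * B) := by
    intro i hi
    have hsplit : a i / A - b i / B = (a i - b i) / A + b i * (B - A) / (A * B) := by
      field_simp; ring
    calc |a i / A - b i / B| ≤ |(a i - b i) / A| + |b i * (B - A) / (A * B)| := by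
          rw [hsplit]; exact abs_add_le _ _
      _ = |a i - b i| / A + b i * |A - B| / (A * B) := by
          rw [abs_div, abs_div, abs_mul, abs_of_pos hA, abs_of_pos (mul_pos hA hB),
            abs_of_nonneg (hb i hi), abs_sub_comm B A]
  calc ∑ i ∈ s, |a i / A - b i / B|
      ≤ ∑ i ∈ s, (|a i - b i| / A + b i * |A - B| / (A * B)) := sum_le_sum hterm
    _ = S / A + |A - B| / A := by
        rw [sum_add_distrib, ← sum_div, ← sum_div, ← sum_mul, mul_comm A B,
          mul_div_mul_left _ _ hB.ne']
    _ ≤ 2 * S / A := by rw [two_mul, add_div]; gcongr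

theorem stmt_6_general {V : Type*} [Fintype V] (x xhat y : V → ℝ)
    (hx1 : ∑ v, x v = 1) (hy1 : ∑ v, y v = 1)
    (hD : 0 < (1 / 2) * ∑ v, |x v - y v|)
    (hZ : 0 < ∑ i, max (y i - xhat i) 0) :
    (1 / 2) * ∑ v, |(max (y v - x v) 0 / ∑ i, max (y i - x i) 0)
        - (max (y v - xhat v) 0 / ∑ i, max (y i - xhat i) 0)| ≤
      (∑ v, |x v - xhat v|) / ((1 / 2) * ∑ v, |x v - y v|) := by
  have hmass := sum_max_sub_zero_eq_half_sum_abs_sub univ x y (hx1.trans hy1.symm)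
  have hnorm := sum_abs_div_sum_sub_div_sum_le univ (fun v ↦ max (y v - x v) 0)
    (fun v ↦ max (y v - xhat v) 0) (fun _ _ ↦ le_max_right _ _) (hmass ▸ hD) hZ
  have hlip : ∑ v, |max (y v - x v) 0 - max (y v - xhat v) 0| ≤ ∑ v, |x v - xhat v| :=
    sum_le_sum fun v _ ↦ abs_max_sub_zero_sub_max_sub_zero_le _ _ _
  rw [hmass] at hnorm ⊢
  calc (1 / 2) * ∑ v, _ ≤ (1 / 2) * (2 * (∑ v, |max (y v - x v) 0 - max (y v - xhat v) 0|)
        / ((1 / 2) * ∑ v, |x v - y v|)) := by gcongr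
    _ ≤ (1 / 2) * (2 * (∑ v, |x v - xhat v|) / ((1 / 2) * ∑ v, |x v - y v|)) := by gcongr
    _ = _ := by ring

theorem stmt_6 {V : Type*} [Fintype V] (x xhat y : V → ℝ)
    (hx : ∀ v, 0 ≤ x v) (hxhat : ∀ v, 0 ≤ xhat v) (hy : ∀ v, 0 ≤ y v)
    (hx1 : ∑ v, x v = 1) (hxhat1 : ∑ v, xhat v = 1) (hy1 : ∑ v, y v = 1)
    (hD : 0 < (1 / 2) * ∑ v, |x v - y v|)
    (hZ : 0 < ∑ i, max (y i - xhat i) 0) :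
    (1 / 2) * ∑ v, |(max (y v - x v) 0 / ∑ i, max (y i - x i) 0)
        - (max (y v - xhat v) 0 / ∑ i, max (y i - xhat i) 0)| ≤
      (∑ v, |x v - xhat v|) / ((1 / 2) * ∑ v, |x v - y v|) :=
  stmt_6_general x xhat y hx1 hy1 hD hZ
end

section
/- Proposition 2 (approximated upper bound): with x, x̂, y probability distributions on finite V, x_v, y_v > 0 for all v, d ∈ V, β_d = max(1 − y_d/x_d, 0), η > 0 and ℓ(z) = ln(1+e^{ηz})/η, define Û = (Σ_{v∉S} |x_v − x̂_v|) / (Σ_v x_v·ℓ(y_v/x_v − 1)) where S ⊆ V with x_v = x̂_v on S. If x_d < 1 then Û < (Σ_{v∉S} |x_v − x̂_v|) / ((1 − x_d)·ℓ(−1) + x_d·ℓ(−β_d)). -/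
/-!
The loss `ℓ` is strictly increasing. Every `v ≠ d` has `y_v / x_v - 1 > -1`, so its term of the
denominator exceeds `x_v ℓ(-1)`, and these weights add up to `1 - x_d > 0`; the term of `d` is at
least `x_d ℓ(-β_d)` because `-β_d = min (y_d / x_d - 1) 0`. Hence the denominator of `Û` strictly
exceeds the approximating one, which is positive, and the numerator is positive.
-/

open Finset

noncomputable def softplus (η z : ℝ) : ℝ := Real.log (1 + Real.exp (η * z)) / η

theorem softplus_pos {η : ℝ} (hη : 0 < η) (z : ℝ) : 0 < softplus η z :=
  div_pos (Real.log_pos (lt_add_of_pos_right 1 (Real.exp_pos _))) hη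

theorem softplus_strictMono {η : ℝ} (hη : 0 < η) : StrictMono (softplus η) := fun a b hab =>
  div_lt_div_of_pos_right
    (Real.log_lt_log (by positivity)
      (add_lt_add_right (Real.exp_lt_exp.mpr (mul_lt_mul_of_pos_left hab hη)) 1)) hη

theorem sum_mul_lt_sum_mul_of_lt {ι : Type*} {s : Finset ι} (hs : s.Nonempty) {f : ℝ → ℝ}
    (hf : StrictMono f) {w a : ι → ℝ} {c : ℝ} (hw : ∀ i ∈ s, 0 < w i) (ha : ∀ i ∈ s, c < a i) :
    (∑ i ∈ s, w i) * f c < ∑ i ∈ s, w i * f (a i) := by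
  rw [sum_mul]
  exact sum_lt_sum_of_nonempty hs fun i hi => mul_lt_mul_of_pos_left (hf (ha i hi)) (hw i hi)

theorem add_mul_lt_sum_mul_of_strictMono {V : Type*} [Fintype V] [DecidableEq V] {f : ℝ → ℝ}
    (hf : StrictMono f) {x y : V → ℝ} (d : V) (hx : ∀ v, 0 < x v) (hy : ∀ v, 0 < y v)
    (hx1 : ∑ v, x v = 1) (hxd : x d < 1) :
    (1 - x d) * f (-1) + x d * f (-max (1 - y d / x d) 0) < ∑ v, x v * f (y v / x v - 1) := by
  have hrest : ∑ v ∈ univ.erase d, x v = 1 - x d := by rw [sum_erase_eq_sub (mem_univ d), hx1]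
  have hne : (univ.erase d).Nonempty := nonempty_of_sum_ne_zero (f := x) (by linarith)
  have hothers : (1 - x d) * f (-1) < ∑ v ∈ univ.erase d, x v * f (y v / x v - 1) :=
    hrest ▸ sum_mul_lt_sum_mul_of_lt hne hf (fun v _ => hx v)
      fun v _ => by linarith [div_pos (hy v) (hx v)]
  have hd : x d * f (-max (1 - y d / x d) 0) ≤ x d * f (y d / x d - 1) :=
    mul_le_mul_of_nonneg_left (hf.monotone (neg_le.mpr (by simp))) (hx d).le
  rw [← add_sum_erase _ _ (mem_univ d)]
  linarith

theorem stmt_16_general {V : Type*} [Fintype V] [DecidableEq V]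
    (x xhat y : V → ℝ) (d : V) (S : Finset V)
    (hx : ∀ v, 0 < x v) (hy : ∀ v, 0 < y v)
    (hx1 : ∑ v, x v = 1)
    (hxd : x d < 1)
    (hnum : 0 < ∑ v ∈ Sᶜ, |x v - xhat v|)
    (η : ℝ) (hη : 0 < η) :
    (∑ v ∈ Sᶜ, |x v - xhat v|) /
        (∑ v, x v * (Real.log (1 + Real.exp (η * (y v / x v - 1))) / η)) <
      (∑ v ∈ Sᶜ, |x v - xhat v|) /
        ((1 - x d) * (Real.log (1 + Real.exp (η * (-1))) / η)
          + x d * (Real.log (1 + Real.exp (η * (-(max (1 - y d / x d) 0)))) / η)) := by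
  change _ / ∑ v, x v * softplus η (y v / x v - 1) <
    _ / ((1 - x d) * softplus η (-1) + x d * softplus η (-max (1 - y d / x d) 0))
  have hden : 0 < (1 - x d) * softplus η (-1) + x d * softplus η (-max (1 - y d / x d) 0) := by
    have := softplus_pos hη (-1)
    have := softplus_pos hη (-max (1 - y d / x d) 0)
    have := hx d
    have : 0 < 1 - x d := by linarith
    positivity
  exact div_lt_div_of_pos_left hnum hden
    (add_mul_lt_sum_mul_of_strictMono (softplus_strictMono hη) d hx hy hx1 hxd)

theorem stmt_16 {V : Type*} [Fintype V] [DecidableEq V]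
    (hV : 2 ≤ Fintype.card V)
    (x xhat y : V → ℝ) (d : V) (S : Finset V)
    (hx : ∀ v, 0 < x v) (hy : ∀ v, 0 < y v) (hxhat : ∀ v, 0 ≤ xhat v)
    (hx1 : ∑ v, x v = 1) (hxhat1 : ∑ v, xhat v = 1) (hy1 : ∑ v, y v = 1)
    (hagree : ∀ v ∈ S, x v = xhat v)
    (hxd : x d < 1)
    (hnum : 0 < ∑ v ∈ Sᶜ, |x v - xhat v|)
    (η : ℝ) (hη : 0 < η) :
    (∑ v ∈ Sᶜ, |x v - xhat v|) /
        (∑ v, x v * (Real.log (1 + Real.exp (η * (y v / x v - 1))) / η)) <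
      (∑ v ∈ Sᶜ, |x v - xhat v|) /
        ((1 - x d) * (Real.log (1 + Real.exp (η * (-1))) / η)
          + x d * (Real.log (1 + Real.exp (η * (-(max (1 - y d / x d) 0)))) / η)) :=
  stmt_16_general x xhat y d S hx hy hx1 hxd hnum η hη
end
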